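/- Let Ω ⊆ ℝⁿ be open, let F : Ω → Ω be continuously differentiable, and let x̄ ∈ Ω be a fixed point of F such that every complex eigenvalue of the Jacobian matrix F′(x̄) has absolute value strictly smaller than 1. Let |λ_max| denote the largest absolute value of an eigenvalue of F′(x̄). Then for every ε > 0 with |λ_max| + ε < 1 there exist δ > 0 and C > 0 such that for every x ∈ Ω with ‖x − x̄‖ < δ and every k ∈ ℕ, the iterate F^{(k)}(x) is defined and satisfies ‖F^{(k)}(x) − x̄‖ ≤ C·(|λ_max| + ε)^k·‖x − x̄‖; in particular the fixed point iteration converges locally to x̄ with at least linear rate. -/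

import Mathlib

/-!
Let `A = F'(x̄)`. Gelfand's formula for the complexified Jacobian, whose operator norm dominates
that of `A` on real vectors, gives a power with `‖A ^ m‖ ≤ r ^ m` for `r = ρ + ε / 2`. The adapted
norm `N v = ∑_{k < m} ‖A ^ k v‖ / r ^ k` is equivalent to `‖·‖` and satisfies `N (A v) ≤ r N v`.
Since `F y - x̄ = A (y - x̄) + o(‖y - x̄‖)`, the map `F` contracts `N (· - x̄)` by the factor
`ρ + ε` near `x̄`, and iterating this contraction gives the estimate.
-/

open Filter Topology Finset

theorem spectralRadius_le_ofReal_of_forall_norm_le {A : Type*} [Ring A] [Algebra ℂ A] {a : A}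
    {ρ : ℝ} (h : ∀ z ∈ spectrum ℂ a, ‖z‖ ≤ ρ) : spectralRadius ℂ a ≤ ENNReal.ofReal ρ :=
  iSup₂_le fun z hz => by
    rw [← enorm_eq_nnnorm, ← ofReal_norm]
    exact ENNReal.ofReal_le_ofReal (h z hz)

theorem eventually_norm_pow_le_of_spectralRadius_lt {A : Type*} [NormedRing A] [NormedAlgebra ℂ A]
    [CompleteSpace A] (a : A) {r : ℝ} (hr : 0 ≤ r) (h : spectralRadius ℂ a < ENNReal.ofReal r) :
    ∀ᶠ k in atTop, ‖a ^ k‖ ≤ r ^ k := by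
  filter_upwards [(spectrum.pow_norm_pow_one_div_tendsto_nhds_spectralRadius a).eventually
    (gt_mem_nhds h), eventually_ne_atTop 0] with k hk hk0
  rw [ENNReal.ofReal_lt_ofReal_iff'] at hk
  rw [one_div, Real.rpow_inv_lt_iff_of_pos (norm_nonneg _) hr (by positivity),
    Real.rpow_natCast] at hk
  exact hk.1.le

namespace Matrix

variable {ι : Type*} [Fintype ι] [DecidableEq ι]

theorem norm_toEuclideanCLM_le_norm_toEuclideanCLM_map_ofReal (M : Matrix ι ι ℝ) :
    ‖toEuclideanCLM (𝕜 := ℝ) M‖ ≤ ‖toEuclideanCLM (𝕜 := ℂ) (M.map Complex.ofReal)‖ := by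
  have norm_complexify (v : EuclideanSpace ℝ ι) :
      ‖(WithLp.toLp 2 (Complex.ofRealHom ∘ v) : EuclideanSpace ℂ ι)‖ = ‖v‖ := by
    simp [EuclideanSpace.norm_eq]
  refine ContinuousLinearMap.opNorm_le_bound _ (norm_nonneg _) fun v => ?_
  have hcomm :
      toEuclideanCLM (𝕜 := ℂ) (M.map Complex.ofReal) (WithLp.toLp 2 (Complex.ofRealHom ∘ v))
        = WithLp.toLp 2 (Complex.ofRealHom ∘ toEuclideanCLM (𝕜 := ℝ) M v) := by
    ext i
    exact (RingHom.map_mulVec Complex.ofRealHom M v i).symm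
  rw [← norm_complexify, ← hcomm, ← norm_complexify v]
  exact ContinuousLinearMap.le_opNorm _ _

theorem eventually_norm_toEuclideanCLM_pow_le (J : Matrix ι ι ℝ) {r : ℝ} (hr : 0 ≤ r)
    (h : spectralRadius ℂ (J.map Complex.ofReal) < ENNReal.ofReal r) :
    ∀ᶠ k in atTop, ‖toEuclideanCLM (𝕜 := ℝ) J ^ k‖ ≤ r ^ k := by
  have hspec : spectralRadius ℂ (toEuclideanCLM (𝕜 := ℂ) (J.map Complex.ofReal))
      = spectralRadius ℂ (J.map Complex.ofReal) := by
    rw [spectralRadius, spectralRadius, AlgEquiv.spectrum_eq]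
  filter_upwards [eventually_norm_pow_le_of_spectralRadius_lt _ hr (hspec ▸ h)] with k hk
  rw [← map_pow] at hk ⊢
  refine (norm_toEuclideanCLM_le_norm_toEuclideanCLM_map_ofReal _).trans ?_
  rwa [show J.map Complex.ofReal ^ k = (J ^ k).map Complex.ofReal from
    (map_pow Complex.ofRealHom.mapMatrix J k).symm] at hk

end Matrix

theorem iterate_le_pow_mul_of_le_mul {α : Type*} {f : α → α} {g : α → ℝ} {δ t : ℝ}
    (ht₀ : 0 ≤ t) (ht₁ : t ≤ 1) (hf : ∀ y, g y < δ → g (f y) ≤ t * g y) {x : α}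
    (hx₀ : 0 ≤ g x) (hx : g x < δ) (k : ℕ) : g (f^[k] x) ≤ t ^ k * g x := by
  induction k with
  | zero => simp
  | succ k ih =>
    have hk : g (f^[k] x) < δ :=
      ih.trans_lt ((mul_le_of_le_one_left hx₀ (pow_le_one₀ ht₀ ht₁)).trans_lt hx)
    calc g (f^[k + 1] x) ≤ t * g (f^[k] x) := by
          rw [Function.iterate_succ_apply']; exact hf _ hk
      _ ≤ t * (t ^ k * g x) := mul_le_mul_of_nonneg_left ih ht₀
      _ = t ^ (k + 1) * g x := by ring

section AdaptedNorm

variable {E : Type*} [NormedAddCommGroup E] [NormedSpace ℝ E] (A : E →L[ℝ] E) (r : ℝ) (m : ℕ)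

noncomputable def adaptedNorm (v : E) : ℝ :=
  ∑ k ∈ range m, ‖(A ^ k) v‖ / r ^ k

variable {A r m}

theorem norm_le_adaptedNorm (hr : 0 ≤ r) (hm : m ≠ 0) (v : E) : ‖v‖ ≤ adaptedNorm A r m v := by
  calc ‖v‖ = ‖(A ^ 0) v‖ / r ^ 0 := by simp
    _ ≤ adaptedNorm A r m v := single_le_sum (f := fun k => ‖(A ^ k) v‖ / r ^ k)
        (fun k _ => by positivity) (mem_range.2 (Nat.pos_of_ne_zero hm))

theorem adaptedNorm_add_le (hr : 0 ≤ r) (u v : E) :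
    adaptedNorm A r m (u + v) ≤ adaptedNorm A r m u + adaptedNorm A r m v := by
  rw [adaptedNorm, adaptedNorm, adaptedNorm, ← sum_add_distrib]
  gcongr with k
  rw [map_add, ← add_div]
  gcongr
  exact norm_add_le _ _

theorem exists_adaptedNorm_le (hr : 0 ≤ r) : ∃ C > 0, ∀ v : E, adaptedNorm A r m v ≤ C * ‖v‖ := by
  refine ⟨∑ k ∈ range m, ‖A ^ k‖ / r ^ k + 1, by positivity, fun v => ?_⟩
  calc adaptedNorm A r m v ≤ ∑ k ∈ range m, ‖A ^ k‖ / r ^ k * ‖v‖ := by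
        unfold adaptedNorm
        gcongr with k
        rw [div_mul_eq_mul_div]
        gcongr
        exact (A ^ k).le_opNorm v
    _ ≤ (∑ k ∈ range m, ‖A ^ k‖ / r ^ k + 1) * ‖v‖ := by
        rw [← sum_mul]; gcongr; linarith

/-- The sum telescopes, trading the term `‖v‖` for `‖A ^ m v‖ / r ^ m ≤ ‖v‖`. -/
theorem adaptedNorm_apply_le (hr : 0 < r) (hAm : ‖A ^ m‖ ≤ r ^ m) (v : E) :
    adaptedNorm A r m (A v) ≤ r * adaptedNorm A r m v := by
  have hshift : adaptedNorm A r m (A v) = r * ∑ k ∈ range m, ‖(A ^ (k + 1)) v‖ / r ^ (k + 1) := by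
    rw [adaptedNorm, mul_sum]
    refine sum_congr rfl fun k _ => ?_
    rw [pow_succ, mul_apply_eq_comp]
    field_simp
    ring
  have htelescope : ∑ k ∈ range m, ‖(A ^ (k + 1)) v‖ / r ^ (k + 1) + ‖v‖
      = adaptedNorm A r m v + ‖(A ^ m) v‖ / r ^ m := by
    have := sum_range_succ' (fun k => ‖(A ^ k) v‖ / r ^ k) m
    rw [sum_range_succ] at this
    simpa [adaptedNorm] using this.symm
  have hlast : ‖(A ^ m) v‖ / r ^ m ≤ ‖v‖ := by
    rw [div_le_iff₀ (by positivity), mul_comm]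
    exact ((A ^ m).le_opNorm v).trans (by gcongr)
  rw [hshift]
  gcongr
  linarith

theorem eventually_adaptedNorm_sub_le {F : E → E} {x₀ : E} (hF : HasFDerivAt F A x₀)
    (hfix : F x₀ = x₀) (hr : 0 < r) (hm : m ≠ 0) (hAm : ‖A ^ m‖ ≤ r ^ m) {t : ℝ} (hrt : r < t) :
    ∀ᶠ y in 𝓝 x₀, adaptedNorm A r m (F y - x₀) ≤ t * adaptedNorm A r m (y - x₀) := by
  obtain ⟨C, hC₀, hC⟩ := exists_adaptedNorm_le (A := A) (m := m) hr.le
  filter_upwards [hF.isLittleO.def (show 0 < (t - r) / C by have := sub_pos.2 hrt; positivity)]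
    with y hy
  have hdecomp : F y - x₀ = A (y - x₀) + (F y - F x₀ - A (y - x₀)) := by rw [hfix]; abel
  calc adaptedNorm A r m (F y - x₀)
      ≤ adaptedNorm A r m (A (y - x₀)) + adaptedNorm A r m (F y - F x₀ - A (y - x₀)) := by
        rw [hdecomp]; exact adaptedNorm_add_le hr.le _ _
    _ ≤ r * adaptedNorm A r m (y - x₀) + C * ((t - r) / C * ‖y - x₀‖) := by
        gcongr
        · exact adaptedNorm_apply_le hr hAm _
        · exact (hC _).trans (by gcongr)
    _ = r * adaptedNorm A r m (y - x₀) + (t - r) * ‖y - x₀‖ := by field_simp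
    _ ≤ r * adaptedNorm A r m (y - x₀) + (t - r) * adaptedNorm A r m (y - x₀) := by
        gcongr
        exact norm_le_adaptedNorm hr.le hm _
    _ = t * adaptedNorm A r m (y - x₀) := by ring

theorem exists_norm_iterate_sub_le_of_hasFDerivAt {F : E → E} {x₀ : E} (hF : HasFDerivAt F A x₀)
    (hfix : F x₀ = x₀) (hr : 0 < r) (hm : m ≠ 0) (hAm : ‖A ^ m‖ ≤ r ^ m) {t : ℝ} (hrt : r < t)
    (ht : t ≤ 1) :
    ∃ δ > 0, ∃ C > 0, ∀ x, ‖x - x₀‖ < δ → ∀ k : ℕ, ‖F^[k] x - x₀‖ ≤ C * t ^ k * ‖x - x₀‖ := by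
  obtain ⟨C, hC₀, hC⟩ := exists_adaptedNorm_le (A := A) (m := m) hr.le
  obtain ⟨δ, hδ, hstep⟩ :=
    Metric.eventually_nhds_iff.1 (eventually_adaptedNorm_sub_le hF hfix hr hm hAm hrt)
  have ht₀ : 0 ≤ t := hr.le.trans hrt.le
  have hnorm := norm_le_adaptedNorm (A := A) hr.le hm
  refine ⟨δ / C, by positivity, C, hC₀, fun x hx k => ?_⟩
  have hx' : adaptedNorm A r m (x - x₀) < δ :=
    (hC _).trans_lt (by rwa [lt_div_iff₀' hC₀] at hx)
  have hiter := iterate_le_pow_mul_of_le_mul (f := F) (g := fun y => adaptedNorm A r m (y - x₀))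
    ht₀ ht (fun y hy => hstep (by rw [dist_eq_norm]; exact (hnorm _).trans_lt hy))
    ((norm_nonneg _).trans (hnorm _)) hx' k
  calc ‖F^[k] x - x₀‖ ≤ adaptedNorm A r m (F^[k] x - x₀) := hnorm _
    _ ≤ t ^ k * adaptedNorm A r m (x - x₀) := hiter
    _ ≤ t ^ k * (C * ‖x - x₀‖) := by gcongr; exact hC _
    _ = C * t ^ k * ‖x - x₀‖ := by ring

end AdaptedNorm

theorem fixed_point_iteration_local_linear_convergence
    {n : ℕ} (Ω : Set (EuclideanSpace ℝ (Fin n)))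
    (F : EuclideanSpace ℝ (Fin n) → EuclideanSpace ℝ (Fin n))
    (hmaps : Set.MapsTo F Ω Ω)
    (xbar : EuclideanSpace ℝ (Fin n)) (hfix : F xbar = xbar)
    (J : Matrix (Fin n) (Fin n) ℝ)
    (hJ : HasFDerivAt F (Matrix.toEuclideanCLM (𝕜 := ℝ) J) xbar)
    (ρ : ℝ)
    (hρ : IsGreatest ((fun z : ℂ => ‖z‖) '' spectrum ℂ (J.map Complex.ofReal)) ρ) :
    ∀ ε > 0, ρ + ε < 1 →
      ∃ δ > 0, ∃ C > 0, ∀ x ∈ Ω, ‖x - xbar‖ < δ →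
        ∀ k : ℕ, F^[k] x ∈ Ω ∧ ‖F^[k] x - xbar‖ ≤ C * (ρ + ε) ^ k * ‖x - xbar‖ := by
  intro ε hε hρε
  have hρ₀ : 0 ≤ ρ := by
    obtain ⟨z, -, rfl⟩ := hρ.1
    exact norm_nonneg z
  have hrad : spectralRadius ℂ (J.map Complex.ofReal) < ENNReal.ofReal (ρ + ε / 2) :=
    (spectralRadius_le_ofReal_of_forall_norm_le fun z hz => hρ.2 ⟨z, hz, rfl⟩).trans_lt
      ((ENNReal.ofReal_lt_ofReal_iff (by positivity)).2 (by linarith))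
  obtain ⟨m, hAm, hm⟩ :=
    ((J.eventually_norm_toEuclideanCLM_pow_le (by positivity) hrad).and
      (eventually_ne_atTop 0)).exists
  obtain ⟨δ, hδ, C, hC, hconv⟩ :=
    exists_norm_iterate_sub_le_of_hasFDerivAt hJ hfix (by positivity) hm hAm (by linarith) hρε.le
  exact ⟨δ, hδ, C, hC, fun x hx hxδ k => ⟨hmaps.iterate k hx, hconv x hxδ k⟩⟩
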